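/- In the parallel execution of ARC and OPT, after phase P(0), when ARC serves a request on which it misses and the requested page is in neither B₁ nor B₂ (so ARC evicts LRU(L₁) if ℓ₁ = N, or evicts LRU(L₂) if ℓ₁ < N and the directory is full, calls REPLACE, and inserts the page at MRU(T₁)), the change in the potential Φ = p − [(b₁'−t) + 2(t₁'−t) + 3(b₂'−t) + 4(t₂'−t)] satisfies ΔΦ ≤ −1 in both cases. -/

import Mathlib

abbrev Page := ℕ

/-- A valid offline demand-paging execution with cache size `N` on request
sequence `σ`, starting from the empty cache. `C i` is the cache just before
serving request `i` (so `C (i+1)` is the cache just after serving it).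
Demand paging: on a hit the cache is unchanged; on a fault only the requested
page may be brought in. -/
def OptExec (N : ℕ) (σ : List Page) (C : ℕ → Finset Page) : Prop :=
  C 0 = ∅ ∧
  (∀ i, (C i).card ≤ N) ∧
  ∀ i, i < σ.length →
    σ.getD i 0 ∈ C (i + 1) ∧
    C (i + 1) ⊆ C i ∪ {σ.getD i 0} ∧
    (σ.getD i 0 ∈ C i → C (i + 1) = C i)

/-- Number of page faults incurred by an offline execution `C` on `σ`. -/
def optFaults (σ : List Page) (C : ℕ → Finset Page) : ℕ :=
  ((List.range σ.length).filter (fun i => decide (σ.getD i 0 ∉ C i))).length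

/-- The fault count of an optimal offline demand-paging algorithm (OPT)
with cache size `N` on `σ`. -/
noncomputable def optCost (N : ℕ) (σ : List Page) : ℕ :=
  sInf {k | ∃ C, OptExec N σ C ∧ optFaults σ C = k}

/-- The state of the ARC cache: main lists `T1`, `T2` and history lists
`B1`, `B2` (each kept in recency order, MRU at the head, LRU at the end),
together with the adaptive parameter `p`. -/
structure ArcState where
  T1 : List Page
  T2 : List Page
  B1 : List Page
  B2 : List Page
  p  : ℕ

/-- ARC starts with empty lists and `p = 0`. -/
def ArcState.init : ArcState := ⟨[], [], [], [], 0⟩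

/-- ARC's subroutine REPLACE: demote `LRU(T1)` to the MRU position of `B1`
if `|T1| ≥ 1` and either (the requested page was in `B2` and `|T1| = p`) or
`|T1| > p`; otherwise demote `LRU(T2)` to the MRU position of `B2`. -/
def arcReplace (xInB2 : Bool) (s : ArcState) : ArcState :=
  if 1 ≤ s.T1.length ∧ ((xInB2 = true ∧ s.T1.length = s.p) ∨ s.p < s.T1.length) then
    { s with T1 := s.T1.dropLast, B1 := s.T1.getLast?.toList ++ s.B1 }
  else
    { s with T2 := s.T2.dropLast, B2 := s.T2.getLast?.toList ++ s.B2 }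

/-- One step of ARC (cache size `N`, with the ±1 adaptation rule) on a
requested page `x`. -/
def arcStep (N : ℕ) (s : ArcState) (x : Page) : ArcState :=
  if x ∈ s.T1 ∨ x ∈ s.T2 then
    -- cache hit: move `x` to the MRU position of `T2`
    { s with T1 := s.T1.erase x, T2 := x :: s.T2.erase x }
  else if x ∈ s.B1 then
    -- history hit in B1: adapt `p := min (p+1) N`, REPLACE, move `x` to MRU(T2)
    let s2 := arcReplace false { s with p := min (s.p + 1) N }
    { s2 with B1 := s2.B1.erase x, T2 := x :: s2.T2 }
  else if x ∈ s.B2 then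
    -- history hit in B2: adapt `p := max (p-1) 0`, REPLACE, move `x` to MRU(T2)
    let s2 := arcReplace true { s with p := s.p - 1 }
    { s2 with B2 := s2.B2.erase x, T2 := x :: s2.T2 }
  else
    -- cache and directory miss
    let s2 :=
      if s.T1.length + s.B1.length = N then
        if s.T1.length < N then
          arcReplace false { s with B1 := s.B1.dropLast }
        else
          { s with T1 := s.T1.dropLast }
      else if s.T1.length + s.B1.length < N ∧
          N ≤ s.T1.length + s.T2.length + s.B1.length + s.B2.length then
        arcReplace false
          (if s.T1.length + s.T2.length + s.B1.length + s.B2.length = 2 * N then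
            { s with B2 := s.B2.dropLast }
          else s)
      else s
    { s2 with T1 := x :: s2.T1 }

/-- Run ARC on a request sequence. -/
def arcRun (N : ℕ) : ArcState → List Page → ArcState
  | s, [] => s
  | s, x :: xs => arcRun N (arcStep N s x) xs

/-- Number of page faults incurred by ARC on a request sequence. -/
def arcCost (N : ℕ) : ArcState → List Page → ℕ
  | _, [] => 0
  | s, x :: xs => (if x ∈ s.T1 ∨ x ∈ s.T2 then 0 else 1) + arcCost N (arcStep N s x) xs

/-- `t = t₁ + t₂`, the number of pages in ARC's cache. -/
def arcT (s : ArcState) : ℕ := s.T1.length + s.T2.length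

/-- `TOP(X)` for a recency-ordered list `X`: the longest prefix (i.e. the
largest set of most-recently-used pages) of `X` all of whose pages are in
OPT's cache `O`; `topLen` is its size. -/
def topLen (X : List Page) (O : Finset Page) : ℕ :=
  (X.takeWhile (fun q => decide (q ∈ O))).length

/-- `t₁' = |TOP(T1)|`. -/
def arcT1' (s : ArcState) (O : Finset Page) : ℕ := topLen s.T1 O

/-- `t₂' = |TOP(T2)|`. -/
def arcT2' (s : ArcState) (O : Finset Page) : ℕ := topLen s.T2 O

/-- `b₁' = |TOP(L1) ∩ B1|` where `L1 = T1 · B1`. -/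
def arcB1' (s : ArcState) (O : Finset Page) : ℕ :=
  (((s.T1 ++ s.B1).takeWhile (fun q => decide (q ∈ O))).filter
    (fun q => decide (q ∈ s.B1))).length

/-- `b₂' = |TOP(L2) ∩ B2|` where `L2 = T2 · B2`. -/
def arcB2' (s : ArcState) (O : Finset Page) : ℕ :=
  (((s.T2 ++ s.B2).takeWhile (fun q => decide (q ∈ O))).filter
    (fun q => decide (q ∈ s.B2))).length

/-- The potential `Φ = p − [(b₁'−t) + 2(t₁'−t) + 3(b₂'−t) + 4(t₂'−t)]`
with the value `t` supplied explicitly. -/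
def arcPhiAt (s : ArcState) (O : Finset Page) (t : ℤ) : ℤ :=
  (s.p : ℤ) - (((arcB1' s O : ℤ) - t) + 2 * ((arcT1' s O : ℤ) - t)
    + 3 * ((arcB2' s O : ℤ) - t) + 4 * ((arcT2' s O : ℤ) - t))

/-- The potential `Φ = p − [(b₁'−t) + 2(t₁'−t) + 3(b₂'−t) + 4(t₂'−t)]`. -/
def arcPhi (s : ArcState) (O : Finset Page) : ℤ :=
  arcPhiAt s O (arcT s)

/-- ARC's cache directory: all pages it tracks. -/
def arcDir (s : ArcState) : List Page := s.T1 ++ s.T2 ++ s.B1 ++ s.B2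

/-!
If the directory has no repeated page, `TOP(L₁)` determines `TOP(T₁)` and `TOP(L₁) ∩ B₁`: with
`w₁ = |TOP(L₁)|` one has `t₁' = min w₁ t₁` and `b₁' = w₁ - t₁`, and likewise for `L₂`. So, for a
fixed `t`, `Φ` depends only on `p`, `t₁`, `t₂`, `w₁` and `w₂`.

On a directory miss the requested page `x` is in OPT's cache but not in `L₁`, and OPT holds at
most `N` pages. Hence `TOP(L₁)` is a proper prefix of `L₁` when `ℓ₁ = N`, and `TOP(L₂)` one of
`L₂` when the directory is full, so dropping the LRU page of that list changes neither `w₁` nor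
`w₂`. REPLACE keeps `L₁` and `L₂` as lists and moves one boundary `Tᵢ | Bᵢ` by one page, which
changes `Φ` by at most `1`; inserting `x` at `MRU(T₁)` raises `w₁` and `t₁` by one, which lowers
`Φ` by `2`.

After phase `P(0)` the cache is full before and after the request, so `t = N` on both sides and
`ΔΦ ≤ 0 + 1 - 2`. The cache being full comes from ARC's bookkeeping invariant (`ℓ₁ ≤ N`,
`ℓ₁ + ℓ₂ ≤ 2N`, `t ≤ N`, empty histories while `t < N`), under which `t` equals the number of
faults so far, capped at `N`.
-/

namespace List

variable {α : Type*} {p : α → Bool}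

theorem length_takeWhile_append (l₁ l₂ : List α) :
    ((l₁ ++ l₂).takeWhile p).length =
      if (l₁.takeWhile p).length = l₁.length then l₁.length + (l₂.takeWhile p).length
      else (l₁.takeWhile p).length := by
  rw [takeWhile_append]
  split_ifs <;> simp

theorem length_takeWhile_eq_min_append (l₁ l₂ : List α) :
    (l₁.takeWhile p).length = min ((l₁ ++ l₂).takeWhile p).length l₁.length := by
  have := (takeWhile_sublist p (l := l₁)).length_le
  rw [length_takeWhile_append]
  split_ifs <;> omega

theorem length_takeWhile_dropLast {l : List α} (h : (l.takeWhile p).length < l.length) :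
    (l.dropLast.takeWhile p).length = (l.takeWhile p).length := by
  obtain rfl | ⟨l, y, rfl⟩ := l.eq_nil_or_concat'
  · rfl
  · rw [dropLast_concat]
    rw [length_takeWhile_append] at h ⊢
    split_ifs at h ⊢ <;> simp_all [takeWhile_cons]

theorem length_filter_mem_takeWhile_append [BEq α] [LawfulBEq α] {l₁ l₂ : List α}
    (h : (l₁ ++ l₂).Nodup) :
    (((l₁ ++ l₂).takeWhile p).filter (fun q => decide (q ∈ l₂))).length =
      ((l₁ ++ l₂).takeWhile p).length - l₁.length := by
  have hdisj : ∀ a ∈ l₁, a ∉ l₂ := fun a ha hb => (nodup_append.mp h).2.2 a ha a hb rfl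
  rw [takeWhile_append]
  split_ifs
  · rw [filter_append, filter_eq_nil_iff.mpr (fun a ha => by simpa using hdisj a ha),
      filter_eq_self.mpr (fun a ha => by simpa using (takeWhile_sublist p).subset ha)]
    simp
  · rw [filter_eq_nil_iff.mpr
      (fun a ha => by simpa using hdisj a ((takeWhile_sublist p).subset ha))]
    have := (takeWhile_sublist p (l := l₁)).length_le
    simp only [length_nil]
    omega

theorem dropLast_append_getLast?_toList (l : List α) : l.dropLast ++ l.getLast?.toList = l := by
  obtain rfl | ⟨l, y, rfl⟩ := l.eq_nil_or_concat' <;> simp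

theorem Subperm.nodup {l₁ l₂ : List α} (h : l₁.Subperm l₂) (hl : l₂.Nodup) : l₁.Nodup :=
  let ⟨_, hp, hs⟩ := h
  hp.nodup_iff.mp (hs.nodup hl)

theorem perm_erase_append_cons_erase [BEq α] [LawfulBEq α] {l₁ l₂ : List α} {a : α}
    (h : (l₁ ++ l₂).Nodup) (ha : a ∈ l₁ ++ l₂) :
    (l₁.erase a ++ a :: l₂.erase a).Perm (l₁ ++ l₂) := by
  rw [perm_iff_count]
  intro b
  have hle := nodup_iff_count_le_one.mp h b
  have hpos := count_pos_iff.mpr ha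
  simp only [count_append, count_cons, count_erase] at hle hpos ⊢
  by_cases hab : a = b
  · subst hab
    simp only [beq_self_eq_true, if_true] at hle ⊢
    omega
  · simp [hab]

end List

section TopLen

variable {l : List Page} {O : Finset Page} {x : Page}

theorem topLen_cons_of_mem (hx : x ∈ O) : topLen (x :: l) O = topLen l O + 1 := by
  simp [topLen, hx]

theorem topLen_le_card (h : l.Nodup) : topLen l O ≤ O.card := by
  classical
  have htw := List.takeWhile_sublist (fun q => decide (q ∈ O)) (l := l)
  rw [topLen, ← List.toFinset_card_of_nodup (htw.nodup h)]
  exact Finset.card_le_card fun q hq => by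
    simpa using List.mem_takeWhile_imp (List.mem_toFinset.mp hq)

theorem topLen_add_one_le_card (h : l.Nodup) (hx : x ∈ O) (hxl : x ∉ l) :
    topLen l O + 1 ≤ O.card :=
  topLen_cons_of_mem (l := l) hx ▸ topLen_le_card (List.nodup_cons.mpr ⟨hxl, h⟩)

theorem topLen_dropLast (h : topLen l O < l.length) : topLen l.dropLast O = topLen l O :=
  List.length_takeWhile_dropLast h

theorem topLen_eq_min_append (T B : List Page) :
    topLen T O = min (topLen (T ++ B) O) T.length :=
  List.length_takeWhile_eq_min_append T B

theorem topLen_append_dropLast {T B : List Page} (h : topLen (T ++ B) O < (T ++ B).length) :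
    topLen (T ++ B.dropLast) O = topLen (T ++ B) O := by
  obtain rfl | hB := eq_or_ne B []
  · rfl
  · rw [← List.dropLast_append_of_ne_nil hB, topLen_dropLast h]

end TopLen

theorem arcT1'_eq (s : ArcState) (O : Finset Page) :
    arcT1' s O = min (topLen (s.T1 ++ s.B1) O) s.T1.length :=
  topLen_eq_min_append _ _

theorem arcT2'_eq (s : ArcState) (O : Finset Page) :
    arcT2' s O = min (topLen (s.T2 ++ s.B2) O) s.T2.length :=
  topLen_eq_min_append _ _

theorem arcB1'_eq {s : ArcState} (O : Finset Page) (h : (s.T1 ++ s.B1).Nodup) :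
    arcB1' s O = topLen (s.T1 ++ s.B1) O - s.T1.length :=
  List.length_filter_mem_takeWhile_append h

theorem arcB2'_eq {s : ArcState} (O : Finset Page) (h : (s.T2 ++ s.B2).Nodup) :
    arcB2' s O = topLen (s.T2 ++ s.B2) O - s.T2.length :=
  List.length_filter_mem_takeWhile_append h

theorem arcPhiAt_eq {s : ArcState} (O : Finset Page) (t : ℤ)
    (h₁ : (s.T1 ++ s.B1).Nodup) (h₂ : (s.T2 ++ s.B2).Nodup) :
    arcPhiAt s O t = s.p
      - ((topLen (s.T1 ++ s.B1) O - s.T1.length : ℕ)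
        + 2 * (min (topLen (s.T1 ++ s.B1) O) s.T1.length : ℕ)
        + 3 * (topLen (s.T2 ++ s.B2) O - s.T2.length : ℕ)
        + 4 * (min (topLen (s.T2 ++ s.B2) O) s.T2.length : ℕ)) + 10 * t := by
  rw [arcPhiAt, arcB1'_eq O h₁, arcB2'_eq O h₂, arcT1'_eq, arcT2'_eq]
  ring

/-- ARC's state on a request in neither its cache nor its history, after the evictions and
REPLACE and before the requested page enters `MRU(T1)`. -/
def arcMissEvict (N : ℕ) (s : ArcState) : ArcState :=
  if s.T1.length + s.B1.length = N then
    if s.T1.length < N then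
      arcReplace false { s with B1 := s.B1.dropLast }
    else
      { s with T1 := s.T1.dropLast }
  else if s.T1.length + s.B1.length < N ∧
      N ≤ s.T1.length + s.T2.length + s.B1.length + s.B2.length then
    arcReplace false
      (if s.T1.length + s.T2.length + s.B1.length + s.B2.length = 2 * N then
        { s with B2 := s.B2.dropLast }
      else s)
  else s

namespace ArcState

variable {N : ℕ} {s r : ArcState} {b : Bool} {O : Finset Page} {t : ℤ} {x : Page}

theorem arcDir_perm (s : ArcState) : (arcDir s).Perm ((s.T1 ++ s.B1) ++ (s.T2 ++ s.B2)) := by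
  rw [List.perm_iff_count]
  intro a
  simp only [arcDir, List.count_append]
  omega

theorem nodup_L1 (h : (arcDir s).Nodup) : (s.T1 ++ s.B1).Nodup :=
  ((arcDir_perm s).nodup_iff.mp h).of_append_left

theorem nodup_L2 (h : (arcDir s).Nodup) : (s.T2 ++ s.B2).Nodup :=
  ((arcDir_perm s).nodup_iff.mp h).of_append_right

theorem arcReplace_p : (arcReplace b s).p = s.p := by
  unfold arcReplace; split_ifs <;> rfl

theorem arcReplace_L1 : (arcReplace b s).T1 ++ (arcReplace b s).B1 = s.T1 ++ s.B1 := by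
  unfold arcReplace; split_ifs
  · simp only [← List.append_assoc, List.dropLast_append_getLast?_toList]
  · rfl

theorem arcReplace_L2 : (arcReplace b s).T2 ++ (arcReplace b s).B2 = s.T2 ++ s.B2 := by
  unfold arcReplace; split_ifs
  · rfl
  · simp only [← List.append_assoc, List.dropLast_append_getLast?_toList]

theorem length_L1_arcReplace :
    (arcReplace b s).T1.length + (arcReplace b s).B1.length = s.T1.length + s.B1.length := by
  simpa only [List.length_append] using congrArg List.length (arcReplace_L1 (b := b) (s := s))

theorem length_L2_arcReplace :
    (arcReplace b s).T2.length + (arcReplace b s).B2.length = s.T2.length + s.B2.length := by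
  simpa only [List.length_append] using congrArg List.length (arcReplace_L2 (b := b) (s := s))

theorem arcReplace_lengths :
    ((arcReplace b s).T1.length = s.T1.length - 1 ∧ (arcReplace b s).T2 = s.T2) ∨
      ((arcReplace b s).T1 = s.T1 ∧ (arcReplace b s).T2.length = s.T2.length - 1) := by
  unfold arcReplace; split_ifs <;> simp

theorem arcT_arcReplace (h : 0 < s.T2.length ∨ s.p < s.T1.length) :
    arcT (arcReplace b s) + 1 = arcT s := by
  unfold arcReplace arcT; split_ifs with hc
  · simp only [List.length_dropLast]; omega
  · have : 0 < s.T2.length := h.resolve_right fun hp => hc ⟨by omega, Or.inr hp⟩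
    simp only [List.length_dropLast]; omega

theorem arcDir_arcReplace_perm : (arcDir (arcReplace b s)).Perm (arcDir s) := by
  refine (arcDir_perm _).trans ?_
  rw [arcReplace_L1, arcReplace_L2]
  exact (arcDir_perm s).symm

theorem mem_B1_arcReplace (hx : x ∈ s.B1) : x ∈ (arcReplace b s).B1 := by
  unfold arcReplace; split_ifs <;> simp [hx]

theorem mem_B2_arcReplace (hx : x ∈ s.B2) : x ∈ (arcReplace b s).B2 := by
  unfold arcReplace; split_ifs <;> simp [hx]

theorem arcPhiAt_arcReplace_le (h : (arcDir s).Nodup) :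
    arcPhiAt (arcReplace b s) O t ≤ arcPhiAt s O t + 1 := by
  have h' := (arcDir_arcReplace_perm (b := b)).nodup_iff.mpr h
  rw [arcPhiAt_eq O t (nodup_L1 h) (nodup_L2 h), arcPhiAt_eq O t (nodup_L1 h') (nodup_L2 h'),
    arcReplace_L1, arcReplace_L2, arcReplace_p]
  rcases arcReplace_lengths (b := b) (s := s) with ⟨h1, h2⟩ | ⟨h1, h2⟩ <;>
    rw [h1, h2] <;> omega

theorem arcStep_eq_of_not_mem_arcDir (hx : x ∉ arcDir s) :
    arcStep N s x = { arcMissEvict N s with T1 := x :: (arcMissEvict N s).T1 } := by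
  simp only [arcDir, List.mem_append, not_or] at hx
  simp only [arcStep, hx, or_self, if_false]
  rfl

theorem arcDir_dropLast_B1_sublist :
    (arcDir { s with B1 := s.B1.dropLast }).Sublist (arcDir s) :=
  ((List.dropLast_sublist s.B1).append_left (s.T1 ++ s.T2)).append_right s.B2

theorem arcDir_dropLast_B2_sublist :
    (arcDir { s with B2 := s.B2.dropLast }).Sublist (arcDir s) :=
  (List.dropLast_sublist s.B2).append_left (s.T1 ++ s.T2 ++ s.B1)

theorem arcDir_dropLast_T1_sublist :
    (arcDir { s with T1 := s.T1.dropLast }).Sublist (arcDir s) :=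
  (((List.dropLast_sublist s.T1).append_right s.T2).append_right s.B1).append_right s.B2

theorem arcDir_arcMissEvict_subperm : (arcDir (arcMissEvict N s)).Subperm (arcDir s) := by
  unfold arcMissEvict
  split_ifs
  · exact arcDir_arcReplace_perm.subperm.trans arcDir_dropLast_B1_sublist.subperm
  · exact arcDir_dropLast_T1_sublist.subperm
  · exact arcDir_arcReplace_perm.subperm.trans arcDir_dropLast_B2_sublist.subperm
  · exact arcDir_arcReplace_perm.subperm
  · exact List.Subperm.refl _

theorem arcPhiAt_dropLast_B1 (h : (arcDir s).Nodup)
    (hw : topLen (s.T1 ++ s.B1) O < (s.T1 ++ s.B1).length) :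
    arcPhiAt { s with B1 := s.B1.dropLast } O t = arcPhiAt s O t := by
  have h' := arcDir_dropLast_B1_sublist.nodup h
  rw [arcPhiAt_eq O t (nodup_L1 h') (nodup_L2 h'), arcPhiAt_eq O t (nodup_L1 h) (nodup_L2 h)]
  dsimp only
  rw [topLen_append_dropLast hw]

theorem arcPhiAt_dropLast_B2 (h : (arcDir s).Nodup)
    (hw : topLen (s.T2 ++ s.B2) O < (s.T2 ++ s.B2).length) :
    arcPhiAt { s with B2 := s.B2.dropLast } O t = arcPhiAt s O t := by
  have h' := arcDir_dropLast_B2_sublist.nodup h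
  rw [arcPhiAt_eq O t (nodup_L1 h') (nodup_L2 h'), arcPhiAt_eq O t (nodup_L1 h) (nodup_L2 h)]
  dsimp only
  rw [topLen_append_dropLast hw]

theorem arcPhiAt_dropLast_T1 (h : (arcDir s).Nodup) (hB1 : s.B1 = [])
    (hw : topLen s.T1 O < s.T1.length) :
    arcPhiAt { s with T1 := s.T1.dropLast } O t = arcPhiAt s O t := by
  have h' := arcDir_dropLast_T1_sublist.nodup h
  rw [arcPhiAt_eq O t (nodup_L1 h') (nodup_L2 h'), arcPhiAt_eq O t (nodup_L1 h) (nodup_L2 h)]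
  dsimp only
  rw [hB1, List.append_nil, List.append_nil, topLen_dropLast hw, List.length_dropLast]
  omega

theorem arcPhiAt_cons_T1 (h : (arcDir s).Nodup) (hxO : x ∈ O) (hx : x ∉ arcDir s) :
    arcPhiAt { s with T1 := x :: s.T1 } O t = arcPhiAt s O t - 2 := by
  have h' : (arcDir { s with T1 := x :: s.T1 }).Nodup := List.nodup_cons.mpr ⟨hx, h⟩
  rw [arcPhiAt_eq O t (nodup_L1 h') (nodup_L2 h'), arcPhiAt_eq O t (nodup_L1 h) (nodup_L2 h)]
  dsimp only
  rw [List.cons_append, topLen_cons_of_mem hxO, List.length_cons]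
  omega

theorem arcPhiAt_arcMissEvict_le (h : (arcDir s).Nodup) (hO : O.card ≤ N) (hxO : x ∈ O)
    (hx : x ∉ arcDir s) : arcPhiAt (arcMissEvict N s) O t ≤ arcPhiAt s O t + 1 := by
  have hL1 := topLen_add_one_le_card (nodup_L1 h) hxO (by simp_all [arcDir])
  have hL2 := topLen_le_card (O := O) (nodup_L2 h)
  unfold arcMissEvict
  split_ifs
  · have hdrop := arcPhiAt_dropLast_B1 (O := O) (t := t) h
      (by simp only [List.length_append]; omega)
    have := arcPhiAt_arcReplace_le (b := false) (O := O) (t := t)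
      (arcDir_dropLast_B1_sublist.nodup h)
    omega
  · have := topLen_eq_min_append (O := O) s.T1 s.B1
    have := arcPhiAt_dropLast_T1 (O := O) (t := t) h
      (List.eq_nil_of_length_eq_zero (by omega)) (by omega)
    omega
  · have hdrop := arcPhiAt_dropLast_B2 (O := O) (t := t) h
      (by simp only [List.length_append]; omega)
    have := arcPhiAt_arcReplace_le (b := false) (O := O) (t := t)
      (arcDir_dropLast_B2_sublist.nodup h)
    omega
  · exact arcPhiAt_arcReplace_le h
  · omega

theorem arcPhiAt_arcStep_le_of_not_mem_arcDir (h : (arcDir s).Nodup) (hO : O.card ≤ N)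
    (hxO : x ∈ O) (hx : x ∉ arcDir s) : arcPhiAt (arcStep N s x) O t ≤ arcPhiAt s O t - 1 := by
  have hsub := arcDir_arcMissEvict_subperm (N := N) (s := s)
  rw [arcStep_eq_of_not_mem_arcDir hx,
    arcPhiAt_cons_T1 (hsub.nodup h) hxO fun hx' => hx (hsub.subset hx')]
  have := arcPhiAt_arcMissEvict_le (t := t) h hO hxO hx
  omega

structure Invariant (N : ℕ) (s : ArcState) : Prop where
  nodup : (arcDir s).Nodup
  l1_le : s.T1.length + s.B1.length ≤ N
  dir_le : s.T1.length + s.T2.length + s.B1.length + s.B2.length ≤ 2 * N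
  t_le : s.T1.length + s.T2.length ≤ N
  p_le : s.p ≤ N
  hist_nil : s.T1.length + s.T2.length < N → s.B1.length + s.B2.length = 0

theorem invariant_init : ArcState.init.Invariant N := by
  constructor <;> simp [arcDir, ArcState.init]

theorem arcMissEvict_spec (hN : 1 ≤ N) (h : s.Invariant N) :
    (arcMissEvict N s).p = s.p ∧
    (arcMissEvict N s).T1.length + (arcMissEvict N s).B1.length < N ∧
    arcT (arcMissEvict N s) + (arcMissEvict N s).B1.length + (arcMissEvict N s).B2.length < 2 * N ∧
    arcT (arcMissEvict N s) + 1 = min N (arcT s + 1) ∧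
    (arcT (arcMissEvict N s) + 1 < N →
      (arcMissEvict N s).B1.length + (arcMissEvict N s).B2.length = 0) := by
  have := h.l1_le; have := h.dir_le; have := h.t_le; have := h.hist_nil
  unfold arcMissEvict arcT
  split_ifs
  · have hT := arcT_arcReplace (b := false) (s := { s with B1 := s.B1.dropLast })
      (Or.inl (by dsimp only; omega))
    have hL1 := length_L1_arcReplace (b := false) (s := { s with B1 := s.B1.dropLast })
    have hL2 := length_L2_arcReplace (b := false) (s := { s with B1 := s.B1.dropLast })
    simp only [arcT, List.length_dropLast] at hT hL1 hL2
    exact ⟨arcReplace_p, by omega, by omega, by omega, by omega⟩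
  · refine ⟨rfl, ?_, ?_, ?_, ?_⟩ <;> simp only [List.length_dropLast] <;> omega
  · have hT := arcT_arcReplace (b := false) (s := { s with B2 := s.B2.dropLast })
      (Or.inl (by dsimp only; omega))
    have hL1 := length_L1_arcReplace (b := false) (s := { s with B2 := s.B2.dropLast })
    have hL2 := length_L2_arcReplace (b := false) (s := { s with B2 := s.B2.dropLast })
    simp only [arcT, List.length_dropLast] at hT hL1 hL2
    exact ⟨arcReplace_p, by omega, by omega, by omega, by omega⟩
  · have hT := arcT_arcReplace (b := false) (s := s) (Or.inl (by omega))
    have hL1 := length_L1_arcReplace (b := false) (s := s)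
    have hL2 := length_L2_arcReplace (b := false) (s := s)
    simp only [arcT] at hT
    exact ⟨arcReplace_p, by omega, by omega, by omega, by omega⟩
  · exact ⟨rfl, by omega, by omega, by omega, by omega⟩

theorem arcDir_promote_B1_perm (hx : x ∈ r.B1) :
    (arcDir { r with B1 := r.B1.erase x, T2 := x :: r.T2 }).Perm (arcDir r) := by
  rw [List.perm_iff_count]
  intro a
  have := List.perm_iff_count.mp (List.perm_cons_erase hx) a
  simp only [arcDir, List.count_append, List.count_cons] at this ⊢
  omega

theorem arcDir_promote_B2_perm (hx : x ∈ r.B2) :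
    (arcDir { r with B2 := r.B2.erase x, T2 := x :: r.T2 }).Perm (arcDir r) := by
  rw [List.perm_iff_count]
  intro a
  have := List.perm_iff_count.mp (List.perm_cons_erase hx) a
  simp only [arcDir, List.count_append, List.count_cons] at this ⊢
  omega

theorem Invariant.arcStep_of_mem_cache (h : s.Invariant N) (hx : x ∈ s.T1 ∨ x ∈ s.T2) :
    (arcStep N s x).Invariant N ∧ arcT (arcStep N s x) = arcT s := by
  have hstep : arcStep N s x = { s with T1 := s.T1.erase x, T2 := x :: s.T2.erase x } := by
    simp only [arcStep, if_pos hx]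
  have hT := List.perm_erase_append_cons_erase h.nodup.of_append_left.of_append_left
    (List.mem_append.mpr hx)
  have hperm : (arcDir { s with T1 := s.T1.erase x, T2 := x :: s.T2.erase x }).Perm (arcDir s) :=
    (hT.append_right s.B1).append_right s.B2
  have ht := hT.length_eq
  have := (List.erase_sublist (a := x) (l := s.T1)).length_le
  have := h.l1_le; have := h.t_le; have := h.hist_nil; have := h.dir_le
  simp only [List.length_append, List.length_cons] at ht
  rw [hstep]
  refine ⟨⟨hperm.nodup_iff.mpr h.nodup, ?_, ?_, ?_, h.p_le, ?_⟩, ?_⟩ <;>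
    simp -failIfUnchanged only [arcT, List.length_cons] <;> omega

theorem Invariant.arcStep_of_mem_B1 (h : s.Invariant N)
    (hT : ¬(x ∈ s.T1 ∨ x ∈ s.T2)) (hB : x ∈ s.B1) :
    (arcStep N s x).Invariant N ∧ arcT (arcStep N s x) = min N (arcT s + 1) := by
  set r := arcReplace false { s with p := min (s.p + 1) N } with hr
  have hstep : arcStep N s x = { r with B1 := r.B1.erase x, T2 := x :: r.T2 } := by
    simp only [arcStep, if_neg hT, if_pos hB, hr]
  have hxr : x ∈ r.B1 := mem_B1_arcReplace hB
  have hperm := (arcDir_promote_B1_perm hxr).trans arcDir_arcReplace_perm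
  have hb := List.length_pos_of_mem hB
  have hrT := arcT_arcReplace (b := false) (s := { s with p := min (s.p + 1) N })
    (Or.inl (by have := h.l1_le; have := h.t_le; have := h.hist_nil; dsimp only; omega))
  have hL1 := length_L1_arcReplace (b := false) (s := { s with p := min (s.p + 1) N })
  have hL2 := length_L2_arcReplace (b := false) (s := { s with p := min (s.p + 1) N })
  have hp : r.p ≤ N := by rw [hr, arcReplace_p]; exact min_le_right _ _
  have herase := List.length_erase_of_mem hxr
  have := List.length_pos_of_mem hxr
  rw [← hr] at hrT hL1 hL2
  dsimp only at hL1 hL2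
  have := h.l1_le; have := h.t_le; have := h.hist_nil; have := h.dir_le
  rw [hstep]
  refine ⟨⟨hperm.nodup_iff.mpr h.nodup, ?_, ?_, ?_, hp, ?_⟩, ?_⟩ <;>
    simp -failIfUnchanged only [arcT, List.length_cons] at hrT ⊢ <;> omega

theorem Invariant.arcStep_of_mem_B2 (hN : 1 ≤ N) (h : s.Invariant N)
    (hT : ¬(x ∈ s.T1 ∨ x ∈ s.T2)) (hB1 : x ∉ s.B1) (hB : x ∈ s.B2) :
    (arcStep N s x).Invariant N ∧ arcT (arcStep N s x) = min N (arcT s + 1) := by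
  set r := arcReplace true { s with p := s.p - 1 } with hr
  have hstep : arcStep N s x = { r with B2 := r.B2.erase x, T2 := x :: r.T2 } := by
    simp only [arcStep, if_neg hT, if_neg hB1, if_pos hB, hr]
  have hxr : x ∈ r.B2 := mem_B2_arcReplace hB
  have hperm := (arcDir_promote_B2_perm hxr).trans arcDir_arcReplace_perm
  have hb := List.length_pos_of_mem hB
  have := h.l1_le; have := h.t_le; have := h.hist_nil; have := h.dir_le; have := h.p_le
  have hrT := arcT_arcReplace (b := true) (s := { s with p := s.p - 1 }) (by dsimp only; omega)
  have hL1 := length_L1_arcReplace (b := true) (s := { s with p := s.p - 1 })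
  have hL2 := length_L2_arcReplace (b := true) (s := { s with p := s.p - 1 })
  have hp : r.p ≤ N := by rw [hr, arcReplace_p]; dsimp only; omega
  have herase := List.length_erase_of_mem hxr
  have := List.length_pos_of_mem hxr
  rw [← hr] at hrT hL1 hL2
  dsimp only at hL1 hL2
  rw [hstep]
  refine ⟨⟨hperm.nodup_iff.mpr h.nodup, ?_, ?_, ?_, hp, ?_⟩, ?_⟩ <;>
    simp -failIfUnchanged only [arcT, List.length_cons] at hrT ⊢ <;> omega

theorem Invariant.arcStep_of_not_mem_arcDir (hN : 1 ≤ N) (h : s.Invariant N)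
    (hx : x ∉ arcDir s) :
    (arcStep N s x).Invariant N ∧ arcT (arcStep N s x) = min N (arcT s + 1) := by
  have hsub := arcDir_arcMissEvict_subperm (N := N) (s := s)
  obtain ⟨hp, hl1, hdir, ht, hhist⟩ := arcMissEvict_spec hN h
  have := h.p_le
  rw [arcStep_eq_of_not_mem_arcDir hx]
  refine ⟨⟨List.nodup_cons.mpr ⟨fun hx' => hx (hsub.subset hx'), hsub.nodup h.nodup⟩,
    ?_, ?_, ?_, ?_, ?_⟩, ?_⟩ <;> dsimp only [arcT] at * <;>
    simp -failIfUnchanged only [List.length_cons] <;> omega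

theorem Invariant.arcStep (hN : 1 ≤ N) (h : s.Invariant N) :
    (arcStep N s x).Invariant N ∧
      arcT (arcStep N s x) = min N (arcT s + if x ∈ s.T1 ∨ x ∈ s.T2 then 0 else 1) := by
  by_cases hT : x ∈ s.T1 ∨ x ∈ s.T2
  · rw [if_pos hT, add_zero, min_eq_right (a := N) (b := arcT s) h.t_le]
    exact h.arcStep_of_mem_cache hT
  rw [if_neg hT]
  by_cases hB1 : x ∈ s.B1
  · exact h.arcStep_of_mem_B1 hT hB1
  by_cases hB2 : x ∈ s.B2
  · exact h.arcStep_of_mem_B2 hN hT hB1 hB2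
  · exact h.arcStep_of_not_mem_arcDir hN (by simp_all [arcDir])

theorem Invariant.arcRun (hN : 1 ≤ N) (l : List Page) (h : s.Invariant N) :
    (arcRun N s l).Invariant N ∧ arcT (arcRun N s l) = min N (arcT s + arcCost N s l) := by
  induction l generalizing s with
  | nil => exact ⟨h, (min_eq_right (a := N) (b := arcT s) h.t_le).symm⟩
  | cons x l ih =>
    obtain ⟨h', ht'⟩ := h.arcStep (x := x) hN
    obtain ⟨h'', ht''⟩ := ih h'
    refine ⟨h'', ?_⟩
    rw [arcRun, arcCost, ht'', ht']
    split_ifs <;> omega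


end ArcState

theorem arc_directory_miss_potential_general (N : ℕ) (σ : List Page) (C : ℕ → Finset Page)
    (hC : OptExec N σ C)
    (j : ℕ) (hj : j < σ.length)
    (hphase : N ≤ arcCost N ArcState.init (σ.take j))
    (s : ArcState) (hs : s = arcRun N ArcState.init (σ.take j))
    (hmiss : σ.getD j 0 ∉ s.T1 ∧ σ.getD j 0 ∉ s.T2)
    (hnohist : σ.getD j 0 ∉ s.B1 ∧ σ.getD j 0 ∉ s.B2) :
    (s.T1.length + s.B1.length = N →
      arcPhi (arcStep N s (σ.getD j 0)) (C (j + 1)) - arcPhi s (C (j + 1)) ≤ -1) ∧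
    (s.T1.length + s.B1.length < N →
      arcPhi (arcStep N s (σ.getD j 0)) (C (j + 1)) - arcPhi s (C (j + 1)) ≤ -1) := by
  set x := σ.getD j 0
  have hxO : x ∈ C (j + 1) := (hC.2.2 j hj).1
  have hO : (C (j + 1)).card ≤ N := hC.2.1 (j + 1)
  have hN : 1 ≤ N := (Finset.card_pos.mpr ⟨x, hxO⟩).trans_le hO
  obtain ⟨hinv, hrun⟩ := ArcState.invariant_init.arcRun hN (σ.take j)
  rw [← hs] at hinv hrun
  have hx : x ∉ arcDir s := by simp [arcDir, hmiss, hnohist]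
  have htN : arcT s = N := by
    rw [hrun, show arcT ArcState.init = 0 from rfl]
    omega
  have hstepN : arcT (arcStep N s x) = N := by
    rw [(hinv.arcStep_of_not_mem_arcDir hN hx).2, htN]
    omega
  have hΔ : arcPhi (arcStep N s x) (C (j + 1)) - arcPhi s (C (j + 1)) ≤ -1 := by
    rw [arcPhi, arcPhi, hstepN, htN]
    linarith [ArcState.arcPhiAt_arcStep_le_of_not_mem_arcDir (t := N) hinv.nodup hO hxO hx]
  exact ⟨fun _ => hΔ, fun _ => hΔ⟩

/-- Case IV. In the parallel execution of ARC and OPT,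
after phase `P(0)`, when ARC misses on `σ_j` and the requested page is in
neither `B1` nor `B2` (so ARC evicts `LRU(L1)` if `ℓ₁ = N`, or evicts
`LRU(L2)` if `ℓ₁ < N` and the directory is full, calls REPLACE, and inserts
the page at `MRU(T1)`), the change of
`Φ = p − [(b₁'−t) + 2(t₁'−t) + 3(b₂'−t) + 4(t₂'−t)]` (w.r.t. OPT's cache
`C (j+1)`) satisfies `ΔΦ ≤ −1` in both cases. -/
theorem arc_directory_miss_potential (N : ℕ) (σ : List Page) (C : ℕ → Finset Page)
    (hC : OptExec N σ C) (hCopt : optFaults σ C = optCost N σ)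
    (j : ℕ) (hj : j < σ.length)
    (hphase : N ≤ arcCost N ArcState.init (σ.take j))
    (s : ArcState) (hs : s = arcRun N ArcState.init (σ.take j))
    (hmiss : σ.getD j 0 ∉ s.T1 ∧ σ.getD j 0 ∉ s.T2)
    (hnohist : σ.getD j 0 ∉ s.B1 ∧ σ.getD j 0 ∉ s.B2) :
    (s.T1.length + s.B1.length = N →
      arcPhi (arcStep N s (σ.getD j 0)) (C (j + 1)) - arcPhi s (C (j + 1)) ≤ -1) ∧
    (s.T1.length + s.B1.length < N →
      arcPhi (arcStep N s (σ.getD j 0)) (C (j + 1)) - arcPhi s (C (j + 1)) ≤ -1) :=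
  arc_directory_miss_potential_general N σ C hC j hj hphase s hs hmiss hnohist
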